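/- arXiv:2110.13475 — 2 statements merged into one kernel-verified Lean document; each statement's English description precedes it below -/
import Mathlib

section
/- Let P, Q, P′, Q′ be real symmetric positive definite n×n matrices. Then there exists an invertible real n×n matrix M with M P Mᵀ = P′ and M Q Mᵀ = Q′ if and only if the characteristic polynomial of P⁻¹Q equals the characteristic polynomial of P′⁻¹Q′ (equivalently, P⁻¹Q and P′⁻¹Q′ have the same eigenvalues counted with multiplicity). In other words, the vector-valued distance is a complete invariant of pairs of points of SPD_n under the isometry action P ↦ M P Mᵀ of GL(n,ℝ). -/
/-!
Congruence by `M` turns `P⁻¹ * Q` into its conjugate `(Mᴴ)⁻¹ * (P⁻¹ * Q) * Mᴴ`, so the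
characteristic polynomial is an invariant. Conversely, congruence by `(√P)⁻¹` brings `(P, Q)` to
`(1, A)` with `A` Hermitian and `A.charpoly = (P⁻¹ * Q).charpoly`. Unitary matrices fix `1`, and two
Hermitian matrices with the same characteristic polynomial have the same (sorted) eigenvalues,
hence are unitarily conjugate by the spectral theorem.
-/

open Matrix Unitary
open scoped MatrixOrder ComplexOrder

namespace Matrix

variable {ι R 𝕜 : Type*} [Fintype ι] [DecidableEq ι]

theorem charpoly_inv_mul_conj [CommRing R] {M N : Matrix ι ι R} (hM : IsUnit M) (hN : IsUnit N)
    (P Q : Matrix ι ι R) :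
    ((M * P * N)⁻¹ * (M * Q * N)).charpoly = (P⁻¹ * Q).charpoly := by
  have hM' : IsUnit M.det := (isUnit_iff_isUnit_det M).mp hM
  have hN' : IsUnit N.det := (isUnit_iff_isUnit_det N).mp hN
  have hsimilar : (M * P * N)⁻¹ * (M * Q * N) = N⁻¹ * (P⁻¹ * Q * N) := by
    simp only [Matrix.mul_inv_rev, Matrix.mul_assoc, nonsing_inv_mul_cancel_left _ _ hM']
  rw [hsimilar, charpoly_mul_comm, Matrix.mul_assoc, mul_nonsing_inv _ hN', Matrix.mul_one]

variable [RCLike 𝕜]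

def SimulCongr (P Q P' Q' : Matrix ι ι 𝕜) : Prop :=
  ∃ M : Matrix ι ι 𝕜, IsUnit M ∧ M * P * Mᴴ = P' ∧ M * Q * Mᴴ = Q'

namespace SimulCongr

variable {P Q P' Q' P'' Q'' : Matrix ι ι 𝕜}

theorem symm (h : SimulCongr P Q P' Q') : SimulCongr P' Q' P Q := by
  obtain ⟨M, hM, rfl, rfl⟩ := h
  have hM' : IsUnit M.det := (isUnit_iff_isUnit_det M).mp hM
  have hMH : IsUnit Mᴴ.det := (isUnit_iff_isUnit_det _).mp ((isUnit_conjTranspose M).mpr hM)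
  have cancel (X : Matrix ι ι 𝕜) : M⁻¹ * (M * X * Mᴴ) * M⁻¹ᴴ = X := by
    simp only [conjTranspose_nonsing_inv, Matrix.mul_assoc]
    rw [mul_nonsing_inv _ hMH, Matrix.mul_one, nonsing_inv_mul_cancel_left _ _ hM']
  exact ⟨M⁻¹, isUnit_nonsing_inv_iff.mpr hM, cancel P, cancel Q⟩

theorem trans (h : SimulCongr P Q P' Q') (h' : SimulCongr P' Q' P'' Q'') :
    SimulCongr P Q P'' Q'' := by
  obtain ⟨M, hM, rfl, rfl⟩ := h
  obtain ⟨N, hN, rfl, rfl⟩ := h'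
  refine ⟨N * M, hN.mul hM, ?_, ?_⟩ <;> simp only [conjTranspose_mul, Matrix.mul_assoc]

theorem charpoly_inv_mul_eq (h : SimulCongr P Q P' Q') :
    (P'⁻¹ * Q').charpoly = (P⁻¹ * Q).charpoly := by
  obtain ⟨M, hM, rfl, rfl⟩ := h
  exact charpoly_inv_mul_conj hM ((isUnit_conjTranspose M).mpr hM) P Q

end SimulCongr

theorem PosDef.exists_simulCongr_one {P : Matrix ι ι 𝕜} (hP : P.PosDef) {Q : Matrix ι ι 𝕜}
    (hQ : Q.IsHermitian) : ∃ A, A.IsHermitian ∧ SimulCongr P Q 1 A := by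
  set s := CFC.sqrt P
  have hs : IsUnit s := (CFC.isUnit_sqrt_iff P hP.posSemidef.nonneg).mpr hP.isUnit
  have hsH : sᴴ = s := (CFC.sqrt_nonneg P).posSemidef.isHermitian
  have hs' : IsUnit s.det := (isUnit_iff_isUnit_det s).mp hs
  refine ⟨s⁻¹ * Q * s⁻¹ᴴ, isHermitian_mul_mul_conjTranspose _ hQ,
    s⁻¹, isUnit_nonsing_inv_iff.mpr hs, ?_, rfl⟩
  rw [conjTranspose_nonsing_inv, hsH, ← CFC.sqrt_mul_sqrt_self P hP.posSemidef.nonneg,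
    nonsing_inv_mul_cancel_left _ _ hs', mul_nonsing_inv _ hs']

theorem IsHermitian.exists_unitary_conj_eq_of_charpoly_eq {A B : Matrix ι ι 𝕜}
    (hA : A.IsHermitian) (hB : B.IsHermitian) (h : A.charpoly = B.charpoly) :
    ∃ U : unitaryGroup ι 𝕜, conjStarAlgAut 𝕜 _ U A = B := by
  refine ⟨hB.eigenvectorUnitary * star hA.eigenvectorUnitary, ?_⟩
  rw [conjStarAlgAut_mul_apply, conjStarAlgAut_star_eigenvectorUnitary,
    (hA.eigenvalues_eq_eigenvalues_iff hB).mpr h, ← hB.spectral_theorem]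

theorem IsHermitian.simulCongr_one_of_charpoly_eq {A B : Matrix ι ι 𝕜}
    (hA : A.IsHermitian) (hB : B.IsHermitian) (h : A.charpoly = B.charpoly) :
    SimulCongr 1 A 1 B := by
  obtain ⟨U, hU⟩ := hA.exists_unitary_conj_eq_of_charpoly_eq hB h
  refine ⟨U, (Unitary.toUnits U).isUnit, ?_, hU⟩
  rw [Matrix.mul_one, ← star_eq_conjTranspose, ← coe_star, coe_mul_star_self]

theorem simulCongr_iff_charpoly_inv_mul_eq {P Q P' Q' : Matrix ι ι 𝕜}
    (hP : P.PosDef) (hQ : Q.IsHermitian) (hP' : P'.PosDef) (hQ' : Q'.IsHermitian) :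
    SimulCongr P Q P' Q' ↔ (P⁻¹ * Q).charpoly = (P'⁻¹ * Q').charpoly := by
  refine ⟨fun h => h.charpoly_inv_mul_eq.symm, fun h => ?_⟩
  obtain ⟨A, hA, hPA⟩ := hP.exists_simulCongr_one hQ
  obtain ⟨B, hB, hPB⟩ := hP'.exists_simulCongr_one hQ'
  have hAB : A.charpoly = B.charpoly := by
    simpa only [inv_one, Matrix.one_mul, h] using
      hPA.charpoly_inv_mul_eq.trans (h.trans hPB.charpoly_inv_mul_eq.symm)
  exact hPA.trans ((hA.simulCongr_one_of_charpoly_eq hB hAB).trans hPB.symm)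

end Matrix

/-- The vector-valued distance is a complete invariant of pairs of points of `SPD_n` under
the isometry action `P ↦ M P Mᵀ` of `GL(n, ℝ)`: two pairs of symmetric positive definite
matrices can be mapped to one another by some invertible `M` if and only if `P⁻¹ Q` and
`P′⁻¹ Q′` have the same characteristic polynomial (i.e. the same eigenvalues with
multiplicity). -/
theorem vvd_complete_invariant {n : ℕ}
    (P Q P' Q' : Matrix (Fin n) (Fin n) ℝ)
    (hP : P.PosDef) (hQ : Q.PosDef) (hP' : P'.PosDef) (hQ' : Q'.PosDef) :
    (∃ M : Matrix (Fin n) (Fin n) ℝ, IsUnit M ∧ M * P * Mᵀ = P' ∧ M * Q * Mᵀ = Q')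
      ↔ (P⁻¹ * Q).charpoly = (P'⁻¹ * Q').charpoly := by
  simpa only [SimulCongr, conjTranspose_eq_transpose_of_trivial] using
    simulCongr_iff_charpoly_inv_mul_eq hP hQ.isHermitian hP' hQ'.isHermitian
end

section
/- Let N be a norm on ℝⁿ that is invariant under every permutation of the coordinates. For real symmetric positive definite n×n matrices P, Q, define d(P,Q) = N(d_vv(P,Q)), where d_vv(P,Q) is the vector of logarithms of the eigenvalues of (√P)⁻¹ Q (√P)⁻¹ sorted in decreasing order. Then d is a metric on SPD_n: d(P,Q) ≥ 0 with d(P,Q) = 0 if and only if P = Q; d(P,Q) = d(Q,P); and d(P,R) ≤ d(P,Q) + d(Q,R) for all P, Q, R ∈ SPD_n. -/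
/-!
Write `M(P, Q) = (√P)⁻¹ Q (√P)⁻¹`, a positive definite matrix with the characteristic polynomial
of `Q P⁻¹`. It equals `1` exactly when `P = Q`, and `M(Q, P)` has the characteristic polynomial of
`M(P, Q)⁻¹`, so `d_vv(Q, P)` is a permutation of `-d_vv(P, Q)`.

For the triangle inequality, `R P⁻¹ = (R Q⁻¹)(Q P⁻¹)` is conjugate to a product `A B` of positive
definite matrices carrying the spectra of `M(P, Q)` and `M(Q, R)`. Compressing `√A B √A` to `k` of
its eigenvectors and expanding determinants of compressions (Cauchy–Binet) shows that each product
of `k` eigenvalues of `A B` is at most a product of `k` eigenvalues of `A` times one of `B`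
(Gel'fand–Naimark). With `log det` additive, `x = d_vv(P, R)` is then majorized by `a↓ + b↓` for
`a = d_vv(P, Q)`, `b = d_vv(Q, R)`, so `x` lies in the convex hull of the permutations of
`a↓ + b↓` (a separating functional contradicts Abel summation), and a convex permutation-invariant
`N` gives `N x ≤ N a + N b`.
-/

open Matrix

namespace Matrix.PosSemidef

open scoped ComplexOrder

/-- The positive semidefinite square root of a positive semidefinite matrix (the definition
removed from Mathlib, restored here with its old meaning). -/
noncomputable def sqrt {𝕜 : Type*} [RCLike 𝕜] {n : Type*} [Fintype n] [DecidableEq n]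
    {A : Matrix n n 𝕜} (hA : A.PosSemidef) : Matrix n n 𝕜 :=
  hA.1.eigenvectorUnitary.1 * diagonal ((↑) ∘ (√·) ∘ hA.1.eigenvalues) *
  (star hA.1.eigenvectorUnitary : Matrix n n 𝕜)

lemma isHermitian_sqrt {𝕜 : Type*} [RCLike 𝕜] {n : Type*} [Fintype n] [DecidableEq n]
    {A : Matrix n n 𝕜} (hA : A.PosSemidef) : hA.sqrt.IsHermitian := by
  have h : star (((↑) : ℝ → 𝕜) ∘ (√·) ∘ hA.1.eigenvalues) =
      ((↑) : ℝ → 𝕜) ∘ (√·) ∘ hA.1.eigenvalues :=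
    funext fun i => RCLike.conj_ofReal _
  unfold sqrt
  simp only [Matrix.IsHermitian, conjTranspose_mul, diagonal_conjTranspose, Matrix.mul_assoc, h]
  rw [← star_eq_conjTranspose, ← star_eq_conjTranspose, star_star]

end Matrix.PosSemidef

/-- The matrix `(√P)⁻¹ Q (√P)⁻¹` is Hermitian (i.e. real symmetric). -/
lemma sqrtConj_isHermitian {n : ℕ} {P Q : Matrix (Fin n) (Fin n) ℝ}
    (hP : P.PosDef) (hQ : Q.PosDef) :
    ((hP.posSemidef.sqrt)⁻¹ * Q * (hP.posSemidef.sqrt)⁻¹).IsHermitian := by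
  have hs : ((hP.posSemidef.sqrt)⁻¹).IsHermitian :=
    hP.posSemidef.isHermitian_sqrt.inv
  have hq : Q.IsHermitian := hQ.isHermitian
  simp only [Matrix.IsHermitian, conjTranspose_mul, hs.eq, hq.eq, Matrix.mul_assoc]

/-- The vector-valued distance between two symmetric positive definite matrices: the vector
of logarithms of the eigenvalues of `(√P)⁻¹ Q (√P)⁻¹`.  (The eigenvalues are listed in the
order provided by the spectral theorem; since the norm `N` below is assumed invariant under
all permutations of coordinates, this agrees with the decreasingly sorted convention.) -/
noncomputable def dvv {n : ℕ} (P Q : Matrix (Fin n) (Fin n) ℝ)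
    (hP : P.PosDef) (hQ : Q.PosDef) : Fin n → ℝ :=
  fun i => Real.log ((sqrtConj_isHermitian hP hQ).eigenvalues i)

open Finset

theorem Fin.exists_perm_eq_comp_of_map_univ_eq {α : Type*} [LinearOrder α] {n : ℕ}
    {f g : Fin n → α} (h : univ.val.map f = univ.val.map g) :
    ∃ σ : Equiv.Perm (Fin n), f = g ∘ σ := by
  have hperm : (List.ofFn f).Perm (List.ofFn g) := by
    rw [← Multiset.coe_eq_coe]
    simpa [Fin.univ_val_map] using h
  have hsorted : f ∘ Tuple.sort f = g ∘ Tuple.sort g :=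
    List.ofFn_injective <| List.Perm.eq_of_sortedLE
      (Tuple.monotone_sort f).sortedLE_ofFn (Tuple.monotone_sort g).sortedLE_ofFn
      (((Tuple.sort f).ofFn_comp_perm f).trans (hperm.trans ((Tuple.sort g).ofFn_comp_perm g).symm))
  refine ⟨(Tuple.sort f).symm.trans (Tuple.sort g), funext fun i => ?_⟩
  simpa using congrFun hsorted ((Tuple.sort f).symm i)

section Majorization

variable {ι : Type*}

def SubsetSumsLE (x a b : ι → ℝ) : Prop :=
  ∀ S : Finset ι, ∃ S₁ S₂ : Finset ι, #S₁ = #S ∧ #S₂ = #S ∧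
    ∑ i ∈ S, x i ≤ ∑ i ∈ S₁, a i + ∑ i ∈ S₂, b i

theorem subsetSumsLE_log {x a b : ι → ℝ} (hx : ∀ i, 0 < x i) (ha : ∀ i, 0 < a i)
    (hb : ∀ i, 0 < b i) (h : ∀ S : Finset ι, ∃ S₁ S₂ : Finset ι, #S₁ = #S ∧ #S₂ = #S ∧
      ∏ i ∈ S, x i ≤ (∏ i ∈ S₁, a i) * ∏ i ∈ S₂, b i) :
    SubsetSumsLE (fun i => Real.log (x i)) (fun i => Real.log (a i)) (fun i => Real.log (b i)) := by
  intro S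
  obtain ⟨S₁, S₂, h₁, h₂, hle⟩ := h S
  refine ⟨S₁, S₂, h₁, h₂, ?_⟩
  rw [← Real.log_prod fun i _ => (hx i).ne', ← Real.log_prod fun i _ => (ha i).ne',
    ← Real.log_prod fun i _ => (hb i).ne',
    ← Real.log_mul (prod_pos fun i _ => ha i).ne' (prod_pos fun i _ => hb i).ne']
  exact Real.log_le_log (prod_pos fun i _ => hx i) hle

theorem Finset.sum_le_sum_of_card_eq_of_forall_le [DecidableEq ι] {S T : Finset ι} (v : ι → ℝ)
    (hcard : #S = #T) (hT : ∀ i ∈ T, ∀ j ∉ T, v j ≤ v i) :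
    ∑ i ∈ S, v i ≤ ∑ i ∈ T, v i := by
  rw [← sum_sdiff (inter_subset_left : S ∩ T ⊆ S), ← sum_sdiff (inter_subset_right : S ∩ T ⊆ T)]
  gcongr ?_ + _
  rw [sdiff_inter_self_left, sdiff_inter_self_right]
  have hcard' : #(S \ T) = #(T \ S) := by
    have := card_sdiff_add_card_inter S T
    have := card_sdiff_add_card_inter T S
    rw [inter_comm] at this
    omega
  rcases (T \ S).eq_empty_or_nonempty with hTS | hTS
  · rw [hTS, card_empty, card_eq_zero] at hcard'
    simp [hTS, hcard']
  obtain ⟨i₀, hi₀, hmin⟩ := exists_min_image _ v hTS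
  calc ∑ j ∈ S \ T, v j ≤ #(S \ T) • v i₀ :=
        sum_le_card_nsmul _ _ _ fun j hj => hT i₀ (mem_sdiff.1 hi₀).1 j (mem_sdiff.1 hj).2
    _ = #(T \ S) • v i₀ := by rw [hcard']
    _ ≤ ∑ i ∈ T \ S, v i := card_nsmul_le_sum _ _ _ hmin

variable {n : ℕ}

theorem sum_le_sum_Ici_sort (v : Fin n → ℝ) {S : Finset (Fin n)} {k : Fin n} (hS : #S = n - k) :
    ∑ i ∈ S, v i ≤ ∑ j ∈ Ici k, v (Tuple.sort v j) := by
  have hmap := sum_map (Ici k) (Tuple.sort v).toEmbedding v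
  rw [Equiv.coe_toEmbedding] at hmap
  rw [← hmap]
  refine sum_le_sum_of_card_eq_of_forall_le v (by simp [hS]) ?_
  simp only [mem_map_equiv, mem_Ici, not_le]
  intro i hi j hj
  simpa using Tuple.monotone_sort v (hj.trans_le hi).le

theorem sum_mul_le_sum_mul_of_nonneg_of_sum_Ici_le :
    ∀ {n : ℕ} {c w z : Fin n → ℝ}, Monotone c → 0 ≤ c →
      (∀ k, ∑ i ∈ Ici k, w i ≤ ∑ i ∈ Ici k, z i) → ∑ i, c i * w i ≤ ∑ i, c i * z i
  | 0, _, _, _, _, _, _ => by simp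
  | n + 1, c, w, z, hc, hc0, hIci => by
    have split : ∀ u : Fin (n + 1) → ℝ, ∑ i, c i * u i =
        c 0 * ∑ i, u i + ∑ i : Fin n, (c i.succ - c 0) * u i.succ := by
      intro u
      simp only [Fin.sum_univ_succ, mul_add, mul_sum, sub_mul, sum_sub_distrib]
      ring
    have tail : ∑ i : Fin n, (c i.succ - c 0) * w i.succ ≤
        ∑ i : Fin n, (c i.succ - c 0) * z i.succ := by
      refine sum_mul_le_sum_mul_of_nonneg_of_sum_Ici_le
        (fun i j hij => sub_le_sub_right (hc (Fin.succ_le_succ_iff.2 hij)) _)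
        (fun i => sub_nonneg.2 (hc (Fin.zero_le _))) fun k => ?_
      simpa [← Fin.map_succEmb_Ici, sum_map] using hIci k.succ
    have total : ∑ i, w i ≤ ∑ i, z i := by simpa using hIci 0
    rw [split, split]
    gcongr ?_ + ?_
    exact mul_le_mul_of_nonneg_left total (hc0 0)

theorem sum_mul_le_sum_mul_of_sum_Ici_le {c w z : Fin n → ℝ} (hc : Monotone c)
    (hsum : ∑ i, w i = ∑ i, z i) (hIci : ∀ k, ∑ i ∈ Ici k, w i ≤ ∑ i ∈ Ici k, z i) :
    ∑ i, c i * w i ≤ ∑ i, c i * z i := by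
  cases n with
  | zero => simp
  | succ n =>
  have shift : ∀ u : Fin (n + 1) → ℝ, ∑ i, c i * u i = c 0 * ∑ i, u i + ∑ i, (c i - c 0) * u i := by
    intro u
    simp only [sub_mul, sum_sub_distrib, mul_sum]
    ring
  rw [shift, shift, hsum, add_le_add_iff_left]
  exact sum_mul_le_sum_mul_of_nonneg_of_sum_Ici_le (fun i j hij => sub_le_sub_right (hc hij) _)
    (fun i => sub_nonneg.2 (hc (Fin.zero_le _))) hIci

/-- Rado's theorem, for `x` majorized by `y` in the form of subset sums against suffix sums. -/
theorem mem_convexHull_range_comp_perm {x y : Fin n → ℝ} (hsum : ∑ i, x i = ∑ i, y i)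
    (hle : ∀ (k : Fin n) (S : Finset (Fin n)), #S = n - k → ∑ i ∈ S, x i ≤ ∑ j ∈ Ici k, y j) :
    x ∈ convexHull ℝ (Set.range fun σ : Equiv.Perm (Fin n) => y ∘ σ) := by
  classical
  by_contra hx
  obtain ⟨f, u, hf, hfx⟩ := geometric_hahn_banach_closed_point (convex_convexHull ℝ _)
    ((Set.finite_range _).isClosed_convexHull (𝕜 := ℝ)) hx
  set c : Fin n → ℝ := fun i => f fun j => if i = j then 1 else 0
  set π := Tuple.sort c
  have hf_apply : ∀ v, f v = ∑ j, c (π j) * v (π j) := fun v => by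
    rw [← f.coe_coe, LinearMap.pi_apply_eq_sum_univ, ← Equiv.sum_comp π]
    simp [c, mul_comm]
  have hsorted : ∑ j, c (π j) * x (π j) ≤ ∑ j, c (π j) * y j := by
    refine sum_mul_le_sum_mul_of_sum_Ici_le (Tuple.monotone_sort c)
      (by rw [Equiv.sum_comp, hsum]) fun k => ?_
    have hmap := sum_map (Ici k) π.toEmbedding x
    rw [Equiv.coe_toEmbedding] at hmap
    exact hmap ▸ hle k _ (by simp)
  have hyπ : f (y ∘ π.symm) < u := hf _ (subset_convexHull ℝ _ ⟨π.symm, rfl⟩)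
  rw [hf_apply] at hfx hyπ
  simp only [Function.comp_apply, Equiv.symm_apply_apply] at hyπ
  linarith

theorem Seminorm.le_add_of_subsetSumsLE (p : Seminorm ℝ (Fin n → ℝ))
    (hp : ∀ (σ : Equiv.Perm (Fin n)) (v : Fin n → ℝ), p (v ∘ σ) = p v) {x a b : Fin n → ℝ}
    (hsum : ∑ i, x i = ∑ i, a i + ∑ i, b i) (hx : SubsetSumsLE x a b) :
    p x ≤ p a + p b := by
  set y := a ∘ Tuple.sort a + b ∘ Tuple.sort b
  have hmem : x ∈ convexHull ℝ (Set.range fun σ : Equiv.Perm (Fin n) => y ∘ σ) := by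
    refine mem_convexHull_range_comp_perm ?_ fun k S hS => ?_
    · simp only [y, Pi.add_apply, sum_add_distrib, Function.comp_apply, Equiv.sum_comp, hsum]
    obtain ⟨S₁, S₂, h₁, h₂, hS₁₂⟩ := hx S
    calc ∑ i ∈ S, x i ≤ ∑ i ∈ S₁, a i + ∑ i ∈ S₂, b i := hS₁₂
      _ ≤ ∑ j ∈ Ici k, a (Tuple.sort a j) + ∑ j ∈ Ici k, b (Tuple.sort b j) :=
        add_le_add (sum_le_sum_Ici_sort a (h₁.trans hS)) (sum_le_sum_Ici_sort b (h₂.trans hS))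
      _ = ∑ j ∈ Ici k, y j := by simp [y, sum_add_distrib]
  obtain ⟨_, ⟨σ, rfl⟩, hσ⟩ := p.convexOn.exists_ge_of_mem_convexHull (by simp) hmem
  calc p x ≤ p (y ∘ σ) := hσ
    _ = p y := hp σ y
    _ ≤ p (a ∘ Tuple.sort a) + p (b ∘ Tuple.sort b) := map_add_le_add p _ _
    _ = p a + p b := by rw [hp, hp]

end Majorization

namespace Matrix

section Sqrt

open scoped ComplexOrder

variable {𝕜 ι : Type*} [RCLike 𝕜] [Fintype ι] [DecidableEq ι] {A : Matrix ι ι 𝕜}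

theorem PosSemidef.sqrt_eq_cfc (hA : A.PosSemidef) : hA.sqrt = cfc Real.sqrt A := by
  rw [hA.1.cfc_eq, IsHermitian.cfc, Unitary.conjStarAlgAut_apply]
  rfl

theorem PosSemidef.sqrt_mul_self (hA : A.PosSemidef) : hA.sqrt * hA.sqrt = A := by
  rw [hA.sqrt_eq_cfc, ← cfc_mul Real.sqrt Real.sqrt A]
  conv_rhs => rw [← cfc_id' ℝ A hA.1.isSelfAdjoint]
  refine cfc_congr fun x hx => ?_
  rw [hA.1.spectrum_real_eq_range_eigenvalues] at hx
  obtain ⟨i, rfl⟩ := hx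
  exact Real.mul_self_sqrt (hA.eigenvalues_nonneg i)

theorem PosDef.isUnit_det_sqrt (hA : A.PosDef) : IsUnit hA.posSemidef.sqrt.det := by
  refine isUnit_of_mul_isUnit_left (y := hA.posSemidef.sqrt.det) ?_
  rw [← det_mul, hA.posSemidef.sqrt_mul_self, ← isUnit_iff_isUnit_det]
  exact hA.isUnit

theorem PosDef.isUnit_sqrt (hA : A.PosDef) : IsUnit hA.posSemidef.sqrt :=
  (isUnit_iff_isUnit_det _).2 hA.isUnit_det_sqrt

end Sqrt

theorem charpoly_mul_mul_self_eq {ι R : Type*} [Fintype ι] [DecidableEq ι] [CommRing R]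
    (S X : Matrix ι ι R) : (S * X * S).charpoly = (X * (S * S)).charpoly := by
  rw [Matrix.mul_assoc, charpoly_mul_comm, Matrix.mul_assoc]

section Congruence

variable {ι : Type*} [Fintype ι] [DecidableEq ι] {S P Q : Matrix ι ι ℝ}

theorem charpoly_inv_mul_mul_inv (hS : S * S = P) :
    (S⁻¹ * Q * S⁻¹).charpoly = (Q * P⁻¹).charpoly := by
  rw [charpoly_mul_mul_self_eq, ← mul_inv_rev, hS]

theorem charpoly_inv_inv_mul_mul_inv (hS : S * S = P) (hSu : IsUnit S.det) :
    ((S⁻¹ * Q * S⁻¹)⁻¹).charpoly = (P * Q⁻¹).charpoly := by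
  rw [mul_inv_rev, mul_inv_rev, nonsing_inv_nonsing_inv _ hSu, ← Matrix.mul_assoc,
    charpoly_mul_mul_self_eq, hS, charpoly_mul_comm]

theorem inv_mul_mul_inv_eq_one_iff (hS : S * S = P) (hSu : IsUnit S.det) :
    S⁻¹ * Q * S⁻¹ = 1 ↔ P = Q := by
  constructor
  · intro h
    calc P = S * (S⁻¹ * Q * S⁻¹) * S := by rw [h, Matrix.mul_one, hS]
      _ = Q := by
        simp only [Matrix.mul_assoc]
        rw [nonsing_inv_mul _ hSu, Matrix.mul_one, ← Matrix.mul_assoc, mul_nonsing_inv _ hSu,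
          Matrix.one_mul]
  · rintro rfl
    rw [← hS, ← Matrix.mul_assoc, nonsing_inv_mul _ hSu, Matrix.one_mul, mul_nonsing_inv _ hSu]

theorem PosDef.inv_mul_mul_inv (hQ : Q.PosDef) (hS : S.IsHermitian) (hSu : IsUnit S) :
    (S⁻¹ * Q * S⁻¹).PosDef := by
  have h := hQ.conjTranspose_mul_mul_same
    (mulVec_injective_of_isUnit (isUnit_nonsing_inv_iff.2 hSu))
  rwa [conjTranspose_nonsing_inv, hS.eq] at h

end Congruence

section Hermitian

variable {ι : Type*} [Fintype ι] [DecidableEq ι] {A : Matrix ι ι ℝ}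

theorem IsHermitian.eigenvalues_eq_one_iff (hA : A.IsHermitian) :
    hA.eigenvalues = 1 ↔ A = 1 := by
  constructor
  · intro h
    rw [hA.spectral_theorem, Unitary.conjStarAlgAut_apply, h]
    simp
  · rintro rfl
    funext i
    have hv := hA.mulVec_eigenvectorBasis i
    rw [one_mulVec] at hv
    have hne : (hA.eigenvectorBasis i).ofLp ≠ 0 :=
      (WithLp.ofLp_eq_zero 2).ne.2 (hA.eigenvectorBasis.orthonormal.ne_zero i)
    simpa using smul_left_injective ℝ hne (hv.symm.trans (one_smul ℝ _).symm)

theorem IsHermitian.roots_charpoly_inv (hA : A.IsHermitian) (hAu : IsUnit A) :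
    (A⁻¹).charpoly.roots = univ.val.map fun i => (hA.eigenvalues i)⁻¹ := by
  rw [nonsing_inv_eq_ringInverse, ← cfc_ringInverse_id (R := ℝ) A hAu hA.isSelfAdjoint,
    hA.charpoly_cfc_eq,
    Polynomial.roots_prod _ _ (prod_ne_zero_iff.2 fun i _ => Polynomial.X_sub_C_ne_zero _)]
  simp

theorem IsHermitian.conjTranspose_eigenvectorUnitary_mul_mul (hA : A.IsHermitian) :
    (hA.eigenvectorUnitary : Matrix ι ι ℝ)ᴴ * A * hA.eigenvectorUnitary =
      diagonal hA.eigenvalues := by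
  have h := hA.conjStarAlgAut_star_eigenvectorUnitary
  rwa [Unitary.conjStarAlgAut_apply, RCLike.ofReal_real_eq_id, Function.id_comp,
    Unitary.coe_star, star_star, star_eq_conjTranspose] at h

end Hermitian

section CauchyBinet

variable {ι κ : Type*} [Fintype ι] [DecidableEq ι] [Fintype κ] [DecidableEq κ]

theorem det_conjTranspose_mul_diagonal_mul (W : Matrix ι κ ℝ) (d : ι → ℝ) :
    (Wᴴ * diagonal d * W).det =
      ∑ f : κ → ι, (∏ j, d (f j)) * ((∏ j, W (f j) j) * (of fun j l => W (f j) l).det) := by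
  have hrows : Wᴴ * diagonal d * W = of fun j => ∑ i, (d i * W i j) • fun l => W i l := by
    ext j l
    rw [of_apply, Finset.sum_apply]
    simp only [mul_apply, conjTranspose_apply, star_trivial, Pi.smul_apply,
      smul_eq_mul, diagonal_apply, mul_ite, mul_zero, sum_ite_eq', mem_univ, if_true]
    exact sum_congr rfl fun _ _ => by ring
  have hdet : (of fun j => ∑ i, (d i * W i j) • fun l => W i l).det =
      (detRowAlternating : (κ → ℝ) [⋀^κ]→ₗ[ℝ] ℝ).toMultilinearMap
        (fun j => ∑ i, (d i * W i j) • fun l => W i l) := rfl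
  rw [hrows, hdet, MultilinearMap.map_sum]
  refine sum_congr rfl fun f _ => ?_
  rw [MultilinearMap.map_smul_univ, prod_mul_distrib, smul_eq_mul, mul_assoc]
  rfl

-- By Cauchy–Binet `c S` is the squared minor of `W` on the rows `S`.
theorem exists_det_conjTranspose_mul_diagonal_mul_eq_sum (W : Matrix ι κ ℝ) :
    ∃ c : Finset ι → ℝ, ∀ d : ι → ℝ, (Wᴴ * diagonal d * W).det =
      ∑ S ∈ univ.powersetCard (Fintype.card κ), (∏ i ∈ S, d i) * c S := by
  classical
  refine ⟨fun S => ∑ f ∈ univ.filter (fun f => f.Injective ∧ univ.image f = S),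
    (∏ j, W (f j) j) * (of fun j l => W (f j) l).det, fun d => ?_⟩
  have hnoninj : ∀ f : κ → ι, ¬ f.Injective → (of fun j l => W (f j) l).det = 0 := fun f hf => by
    obtain ⟨i, j, hfij, hij⟩ := Function.not_injective_iff.1 hf
    exact det_zero_of_row_eq hij (funext fun l => by simp [hfij])
  rw [det_conjTranspose_mul_diagonal_mul, ← sum_filter_add_sum_filter_not univ Function.Injective,
    sum_eq_zero (s := univ.filter (¬ Function.Injective ·)) fun f hf => by
      rw [hnoninj f (mem_filter.1 hf).2, mul_zero, mul_zero], add_zero,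
    ← sum_fiberwise_of_maps_to (g := fun f => univ.image f)
      (t := univ.powersetCard (Fintype.card κ)) fun f hf => by
        rw [mem_powersetCard_univ, card_image_of_injective _ (mem_filter.1 hf).2, card_univ]]
  refine sum_congr rfl fun S _ => ?_
  rw [mul_sum, filter_filter]
  refine sum_congr rfl fun f hf => ?_
  obtain ⟨hinj, rfl⟩ := (mem_filter.1 hf).2
  rw [prod_image fun a _ b _ h => hinj h]

theorem det_conjTranspose_mul_diagonal_mul_le {W : Matrix ι κ ℝ} (hW : Wᴴ * W = 1)
    (d : ι → ℝ) :
    ∃ S : Finset ι, #S = Fintype.card κ ∧ (Wᴴ * diagonal d * W).det ≤ ∏ i ∈ S, d i := by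
  obtain ⟨c, hc⟩ := exists_det_conjTranspose_mul_diagonal_mul_eq_sum W
  set 𝒮 : Finset (Finset ι) := univ.powersetCard (Fintype.card κ)
  -- At the indicator of `S` the expansion reduces to `c S`, and the left side is a PSD determinant.
  have hc_nonneg : ∀ S ∈ 𝒮, 0 ≤ c S := fun S hS => by
    have hindicator : ∑ S' ∈ 𝒮, (∏ i ∈ S', if i ∈ S then (1 : ℝ) else 0) * c S' = c S := by
      refine (sum_eq_single_of_mem S hS fun S' hS' hne => ?_).trans (by simp +contextual)
      obtain ⟨i, hiS', hiS⟩ := not_subset.1 fun hsub => hne <| eq_of_subset_of_card_le hsub <| by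
        rw [mem_powersetCard_univ.1 hS, mem_powersetCard_univ.1 hS']
      rw [prod_eq_zero hiS' (if_neg hiS), zero_mul]
    rw [← hindicator, ← hc]
    refine PosSemidef.det_nonneg (PosSemidef.conjTranspose_mul_mul_same ?_ W)
    exact posSemidef_diagonal_iff.2 fun i => by split_ifs <;> norm_num
  have hc_sum : ∑ S ∈ 𝒮, c S = 1 := by
    have h1 := hc fun _ => 1
    rw [diagonal_one, Matrix.mul_one, hW, det_one] at h1
    simpa using h1.symm
  obtain ⟨S₀, hS₀, hmax⟩ := exists_max_image 𝒮 (fun S => ∏ i ∈ S, d i)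
    (nonempty_of_sum_ne_zero (hc_sum ▸ one_ne_zero))
  refine ⟨S₀, mem_powersetCard_univ.1 hS₀, ?_⟩
  calc (Wᴴ * diagonal d * W).det = ∑ S ∈ 𝒮, (∏ i ∈ S, d i) * c S := hc d
    _ ≤ ∑ S ∈ 𝒮, (∏ i ∈ S₀, d i) * c S :=
      sum_le_sum fun S hS => mul_le_mul_of_nonneg_right (hmax S hS) (hc_nonneg S hS)
    _ = ∏ i ∈ S₀, d i := by rw [← mul_sum, hc_sum, mul_one]

end CauchyBinet

section Compression

variable {ι κ : Type*} [Fintype ι] [Fintype κ] [DecidableEq κ]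

-- `O = W (Wᴴ W)^(-1/2)` is the isometric factor in the polar decomposition of `W`.
theorem exists_det_conjTranspose_mul_mul_eq_det_mul_det {W : Matrix ι κ ℝ}
    (hW : (Wᴴ * W).PosDef) (B : Matrix ι ι ℝ) :
    ∃ O : Matrix ι κ ℝ, Oᴴ * O = 1 ∧ (Wᴴ * B * W).det = (Wᴴ * W).det * (Oᴴ * B * O).det := by
  set R := hW.posSemidef.sqrt
  have hRR : R * R = Wᴴ * W := hW.posSemidef.sqrt_mul_self
  have hRunit : IsUnit R.det := hW.isUnit_det_sqrt
  have hRherm : Rᴴ = R := hW.posSemidef.isHermitian_sqrt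
  have hRinv : (R⁻¹)ᴴ = R⁻¹ := by rw [conjTranspose_nonsing_inv, hRherm]
  refine ⟨W * R⁻¹, ?_, ?_⟩
  · calc (W * R⁻¹)ᴴ * (W * R⁻¹) = R⁻¹ * (Wᴴ * W) * R⁻¹ := by
          rw [conjTranspose_mul, hRinv]
          simp only [Matrix.mul_assoc]
      _ = (R⁻¹ * R) * (R * R⁻¹) := by
          rw [← hRR]
          simp only [Matrix.mul_assoc]
      _ = 1 := by rw [nonsing_inv_mul _ hRunit, mul_nonsing_inv _ hRunit, Matrix.mul_one]
  · have hWO : W = W * R⁻¹ * R := by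
      rw [Matrix.mul_assoc, nonsing_inv_mul _ hRunit, Matrix.mul_one]
    have hsplit : Wᴴ * B * W = R * ((W * R⁻¹)ᴴ * B * (W * R⁻¹)) * R := by
      conv_lhs => rw [hWO]
      rw [conjTranspose_mul, conjTranspose_mul, hRinv, hRherm]
      simp only [Matrix.mul_assoc]
    rw [hsplit, ← hRR, det_mul, det_mul, det_mul]
    ring

variable [DecidableEq ι]

theorem IsHermitian.exists_det_conjTranspose_mul_mul_le {M : Matrix ι ι ℝ} (hM : M.IsHermitian)
    {U : Matrix ι κ ℝ} (hU : Uᴴ * U = 1) :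
    ∃ S : Finset ι, #S = Fintype.card κ ∧ (Uᴴ * M * U).det ≤ ∏ i ∈ S, hM.eigenvalues i := by
  set V := (hM.eigenvectorUnitary : Matrix ι ι ℝ)
  have hVV : V * Vᴴ = 1 := by
    rw [← star_eq_conjTranspose]
    exact Unitary.coe_mul_star_self _
  have hW : (Vᴴ * U)ᴴ * (Vᴴ * U) = 1 := by
    rw [conjTranspose_mul, conjTranspose_conjTranspose, Matrix.mul_assoc, ← Matrix.mul_assoc V,
      hVV, Matrix.one_mul, hU]
  have hUMU : Uᴴ * M * U = (Vᴴ * U)ᴴ * diagonal hM.eigenvalues * (Vᴴ * U) := by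
    rw [← hM.conjTranspose_eigenvectorUnitary_mul_mul, conjTranspose_mul,
      conjTranspose_conjTranspose]
    simp only [Matrix.mul_assoc]
    rw [← Matrix.mul_assoc V Vᴴ, hVV, Matrix.one_mul, ← Matrix.mul_assoc V Vᴴ, hVV,
      Matrix.one_mul]
  rw [hUMU]
  exact det_conjTranspose_mul_diagonal_mul_le hW _

theorem IsHermitian.exists_det_conjTranspose_mul_mul_eq {M : Matrix ι ι ℝ} (hM : M.IsHermitian)
    (S : Finset ι) :
    ∃ U : Matrix ι S ℝ, Uᴴ * U = 1 ∧ (Uᴴ * M * U).det = ∏ i ∈ S, hM.eigenvalues i := by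
  set V := (hM.eigenvectorUnitary : Matrix ι ι ℝ)
  set U : Matrix ι S ℝ := V.submatrix id (↑)
  have hcompress : ∀ X : Matrix ι ι ℝ, Uᴴ * X * U = (Vᴴ * X * V).submatrix (↑) (↑) := fun X => by
    rw [submatrix_mul _ _ _ id _ Function.bijective_id, submatrix_mul _ _ _ id _
      Function.bijective_id, conjTranspose_submatrix]
    rfl
  refine ⟨U, ?_, ?_⟩
  · have h := hcompress 1
    rwa [Matrix.mul_one, Matrix.mul_one, ← star_eq_conjTranspose, Unitary.coe_star_mul_self,
      submatrix_one _ Subtype.val_injective] at h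
  · rw [hcompress, hM.conjTranspose_eigenvectorUnitary_mul_mul,
      submatrix_diagonal _ _ Subtype.val_injective, det_diagonal]
    exact prod_coe_sort S _

/-- Gel'fand–Naimark: compress `√A B √A`, which has the spectrum of `A B`, to its eigenvectors
indexed by `S`. -/
theorem PosDef.exists_prod_eigenvalues_le_mul {A B C : Matrix ι ι ℝ} (hA : A.PosDef)
    (hB : B.PosDef) (hC : C.IsHermitian) (hABC : C.charpoly = (A * B).charpoly) (S : Finset ι) :
    ∃ S₁ S₂ : Finset ι, #S₁ = #S ∧ #S₂ = #S ∧
      ∏ i ∈ S, hC.eigenvalues i ≤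
        (∏ i ∈ S₁, hA.1.eigenvalues i) * ∏ i ∈ S₂, hB.1.eigenvalues i := by
  set T := hA.posSemidef.sqrt
  have hTherm : Tᴴ = T := hA.posSemidef.isHermitian_sqrt
  have hTBT : (T * B * T).PosDef := by
    have h := hB.conjTranspose_mul_mul_same (mulVec_injective_of_isUnit hA.isUnit_sqrt)
    rwa [hTherm] at h
  have heig : hC.eigenvalues = hTBT.1.eigenvalues := by
    rw [IsHermitian.eigenvalues_eq_eigenvalues_iff, hABC, charpoly_mul_comm,
      charpoly_mul_mul_self_eq, hA.posSemidef.sqrt_mul_self]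
  obtain ⟨U, hU, hdetU⟩ := hTBT.1.exists_det_conjTranspose_mul_mul_eq S
  have hTU : (T * U)ᴴ * (T * U) = Uᴴ * A * U := by
    rw [conjTranspose_mul, hTherm, Matrix.mul_assoc, ← Matrix.mul_assoc T,
      hA.posSemidef.sqrt_mul_self, Matrix.mul_assoc]
  have hUAU : (Uᴴ * A * U).PosDef := hA.conjTranspose_mul_mul_same fun x y hxy => by
    have h := congrArg (Uᴴ *ᵥ ·) hxy
    simpa only [mulVec_mulVec, hU, one_mulVec] using h
  obtain ⟨O, hO, hdetO⟩ := exists_det_conjTranspose_mul_mul_eq_det_mul_det (hTU ▸ hUAU) B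
  obtain ⟨S₁, hS₁, hA_le⟩ := hA.1.exists_det_conjTranspose_mul_mul_le hU
  obtain ⟨S₂, hS₂, hB_le⟩ := hB.1.exists_det_conjTranspose_mul_mul_le hO
  refine ⟨S₁, S₂, by simpa using hS₁, by simpa using hS₂, ?_⟩
  calc ∏ i ∈ S, hC.eigenvalues i = (Uᴴ * (T * B * T) * U).det := by rw [heig, hdetU]
    _ = (Uᴴ * A * U).det * (Oᴴ * B * O).det := by
      rw [← hTU, ← hdetO, conjTranspose_mul, hTherm]
      simp only [Matrix.mul_assoc]
    _ ≤ (∏ i ∈ S₁, hA.1.eigenvalues i) * ∏ i ∈ S₂, hB.1.eigenvalues i :=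
      mul_le_mul hA_le hB_le (hB.posSemidef.conjTranspose_mul_mul_same O).det_nonneg
        (hUAU.posSemidef.det_nonneg.trans hA_le)

end Compression

end Matrix

section VectorValuedDistance

variable {n : ℕ} {P Q R : Matrix (Fin n) (Fin n) ℝ}

theorem posDef_sqrtConj (hP : P.PosDef) (hQ : Q.PosDef) :
    ((hP.posSemidef.sqrt)⁻¹ * Q * (hP.posSemidef.sqrt)⁻¹).PosDef :=
  hQ.inv_mul_mul_inv hP.posSemidef.isHermitian_sqrt hP.isUnit_sqrt

theorem dvv_eq_zero_iff (hP : P.PosDef) (hQ : Q.PosDef) : dvv P Q hP hQ = 0 ↔ P = Q := by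
  have hpos := (posDef_sqrtConj hP hQ).eigenvalues_pos
  rw [← inv_mul_mul_inv_eq_one_iff hP.posSemidef.sqrt_mul_self hP.isUnit_det_sqrt,
    ← (sqrtConj_isHermitian hP hQ).eigenvalues_eq_one_iff, funext_iff, funext_iff]
  refine forall_congr' fun i => ⟨fun h => ?_, fun h => by simp [dvv, h]⟩
  by_contra hne
  exact Real.log_ne_zero_of_pos_of_ne_one (hpos i) hne h

theorem exists_perm_dvv_symm (hP : P.PosDef) (hQ : Q.PosDef) :
    ∃ σ : Equiv.Perm (Fin n), dvv Q P hQ hP = (-dvv P Q hP hQ) ∘ σ := by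
  have hM := posDef_sqrtConj hP hQ
  have heig : univ.val.map (sqrtConj_isHermitian hQ hP).eigenvalues =
      univ.val.map fun i => ((sqrtConj_isHermitian hP hQ).eigenvalues i)⁻¹ := by
    have h := (sqrtConj_isHermitian hQ hP).roots_charpoly_eq_eigenvalues
    rw [RCLike.ofReal_real_eq_id, Function.id_comp, charpoly_inv_mul_mul_inv
      hQ.posSemidef.sqrt_mul_self, ← charpoly_inv_inv_mul_mul_inv hP.posSemidef.sqrt_mul_self
      hP.isUnit_det_sqrt, hM.1.roots_charpoly_inv hM.isUnit] at h
    exact h.symm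
  have hneg : -dvv P Q hP hQ =
      Real.log ∘ fun i => ((sqrtConj_isHermitian hP hQ).eigenvalues i)⁻¹ :=
    funext fun i => by simp [dvv, Real.log_inv]
  refine Fin.exists_perm_eq_comp_of_map_univ_eq ?_
  rw [hneg, ← Multiset.map_map, ← heig, Multiset.map_map]
  rfl

theorem sum_dvv (hP : P.PosDef) (hQ : Q.PosDef) :
    ∑ i, dvv P Q hP hQ i = Real.log Q.det - Real.log P.det := by
  have hpos := (posDef_sqrtConj hP hQ).eigenvalues_pos
  have hdet : ((hP.posSemidef.sqrt)⁻¹ * Q * (hP.posSemidef.sqrt)⁻¹).det = Q.det * P.det⁻¹ := by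
    rw [det_eq_sign_charpoly_coeff, charpoly_inv_mul_mul_inv hP.posSemidef.sqrt_mul_self,
      ← det_eq_sign_charpoly_coeff, det_mul, det_nonsing_inv, Ring.inverse_eq_inv]
  have hprod := (sqrtConj_isHermitian hP hQ).det_eq_prod_eigenvalues
  simp only [RCLike.ofReal_real_eq_id, id] at hprod
  simp only [dvv]
  rw [← Real.log_prod fun i _ => (hpos i).ne', ← hprod, hdet,
    Real.log_mul hQ.det_pos.ne' (inv_ne_zero hP.det_pos.ne'), Real.log_inv, sub_eq_add_neg]

theorem subsetSumsLE_dvv (hP : P.PosDef) (hQ : Q.PosDef) (hR : R.PosDef) :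
    SubsetSumsLE (dvv P R hP hR) (dvv P Q hP hQ) (dvv Q R hQ hR) := by
  -- `Y` has the spectrum of `Q P⁻¹`, and `Y * M(Q, R)` is conjugate to `R P⁻¹ = (R Q⁻¹) (Q P⁻¹)`.
  set T := hQ.posSemidef.sqrt
  set Y := T * P⁻¹ * T
  have hY : Y.PosDef := by
    have h := hP.inv.conjTranspose_mul_mul_same (mulVec_injective_of_isUnit hQ.isUnit_sqrt)
    rwa [hQ.posSemidef.isHermitian_sqrt.eq] at h
  have hYeig : hY.1.eigenvalues = (sqrtConj_isHermitian hP hQ).eigenvalues := by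
    rw [IsHermitian.eigenvalues_eq_eigenvalues_iff, charpoly_inv_mul_mul_inv
      hP.posSemidef.sqrt_mul_self, charpoly_mul_mul_self_eq, hQ.posSemidef.sqrt_mul_self,
      charpoly_mul_comm]
  have hYT : Y * (T⁻¹ * R * T⁻¹) = T * (P⁻¹ * R * T⁻¹) := by
    calc Y * (T⁻¹ * R * T⁻¹) = T * P⁻¹ * (T * T⁻¹) * R * T⁻¹ := by
          simp only [Y, Matrix.mul_assoc]
      _ = T * (P⁻¹ * R * T⁻¹) := by
          rw [mul_nonsing_inv _ hQ.isUnit_det_sqrt, Matrix.mul_one]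
          simp only [Matrix.mul_assoc]
  have hcharpoly : ((hP.posSemidef.sqrt)⁻¹ * R * (hP.posSemidef.sqrt)⁻¹).charpoly =
      (Y * (T⁻¹ * R * T⁻¹)).charpoly := by
    rw [charpoly_inv_mul_mul_inv hP.posSemidef.sqrt_mul_self, hYT, charpoly_mul_comm T,
      Matrix.mul_assoc, nonsing_inv_mul _ hQ.isUnit_det_sqrt, Matrix.mul_one,
      charpoly_mul_comm R]
  have h := hY.exists_prod_eigenvalues_le_mul (posDef_sqrtConj hQ hR)
    (sqrtConj_isHermitian hP hR) hcharpoly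
  rw [hYeig] at h
  exact subsetSumsLE_log (posDef_sqrtConj hP hR).eigenvalues_pos
    (posDef_sqrtConj hP hQ).eigenvalues_pos (posDef_sqrtConj hQ hR).eigenvalues_pos h

end VectorValuedDistance

/-- Any permutation-invariant norm `N` on `ℝⁿ`, applied to the vector-valued distance,
induces a metric on the set of real symmetric positive definite matrices. -/
theorem vvd_norm_is_metric {n : ℕ} (N : (Fin n → ℝ) → ℝ)
    (hN0 : ∀ v, N v = 0 ↔ v = 0)
    (hNsmul : ∀ (a : ℝ) (v : Fin n → ℝ), N (a • v) = |a| * N v)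
    (hNadd : ∀ u v, N (u + v) ≤ N u + N v)
    (hNperm : ∀ (σ : Equiv.Perm (Fin n)) (v : Fin n → ℝ), N (v ∘ σ) = N v) :
    ∀ (P Q R : Matrix (Fin n) (Fin n) ℝ)
      (hP : P.PosDef) (hQ : Q.PosDef) (hR : R.PosDef),
      0 ≤ N (dvv P Q hP hQ)
      ∧ (N (dvv P Q hP hQ) = 0 ↔ P = Q)
      ∧ N (dvv P Q hP hQ) = N (dvv Q P hQ hP)
      ∧ N (dvv P R hP hR) ≤ N (dvv P Q hP hQ) + N (dvv Q R hQ hR) := by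
  intro P Q R hP hQ hR
  let p : Seminorm ℝ (Fin n → ℝ) := Seminorm.of N hNadd fun a v => by rw [hNsmul, Real.norm_eq_abs]
  have hNneg : ∀ v, N (-v) = N v := map_neg_eq_map p
  obtain ⟨σ, hσ⟩ := exists_perm_dvv_symm hP hQ
  refine ⟨apply_nonneg p _, by rw [hN0, dvv_eq_zero_iff], by rw [hσ, hNperm, hNneg], ?_⟩
  refine p.le_add_of_subsetSumsLE hNperm ?_ (subsetSumsLE_dvv hP hQ hR)
  rw [sum_dvv, sum_dvv, sum_dvv]
  ring
end
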